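/- Let x₀, ẋ₀, y₀, ẏ₀, v₀, v̇₀ ∈ ℝ, let X(u) = x₀ + ẋ₀(2 + u₋) − ẋ₀/(1 + u₊), Y(u) = y₀ + ẏ₀ u₋ + ẏ₀/(1 − u₊), V(u) = v₀ + v̇₀(1 + u) + ẏ₀² u₊²/(1 − u) − ẋ₀² u₊²/(1 + u) for u < 1, and write x̂ := x₀ + ẋ₀, ŷ := y₀ + ẏ₀. Then the v-part of the discontinuous transformation, v = V + X²(u+1)θ(u) + Y²(u−1)θ(u), maps these geodesics of the continuous metric exactly onto the distributional v-geodesic of the impulsive plane wave with profile f(x,y) = x² − y²: for every u ∈ (0, 1), V(u) + X(u)²(u + 1) + Y(u)²(u − 1) = v₀ + v̇₀(1 + u) + (x̂² − ŷ²) + [2x̂ ẋ₀ + x̂² − 2ŷ ẏ₀ + ŷ²] u, and for every u ∈ (−∞, 0], V(u) = v₀ + v̇₀(1 + u). -/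

import Mathlib

open Set

/-- The kink function `u₊ = u θ(u)`. -/
noncomputable def uplus (u : ℝ) : ℝ := max u 0

/-- The function `u₋ = u θ(-u)`. -/
noncomputable def uminus (u : ℝ) : ℝ := min u 0

/-- The `X`-geodesic of the impulsive plane wave in continuous (Rosen-type) coordinates,
with `X(-1) = x₀`, `X'(-1) = ẋ₀`. -/
noncomputable def Xgeo (x₀ xdot0 : ℝ) (u : ℝ) : ℝ :=
  x₀ + xdot0 * (2 + uminus u) - xdot0 / (1 + uplus u)

/-- The `Y`-geodesic of the impulsive plane wave in continuous (Rosen-type) coordinates,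
with `Y(-1) = y₀`, `Y'(-1) = ẏ₀`. -/
noncomputable def Ygeo (y₀ ydot0 : ℝ) (u : ℝ) : ℝ :=
  y₀ + ydot0 * uminus u + ydot0 / (1 - uplus u)

/-- The `V`-geodesic of the impulsive plane wave in continuous (Rosen-type) coordinates,
with `V(-1) = v₀`, `V'(-1) = v̇₀`. -/
noncomputable def Vgeo (v₀ vdot0 xdot0 ydot0 : ℝ) (u : ℝ) : ℝ :=
  v₀ + vdot0 * (1 + u) + ydot0 ^ 2 * (uplus u) ^ 2 / (1 - u)
    - xdot0 ^ 2 * (uplus u) ^ 2 / (1 + u)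

/-!
For `u > 0` the geodesics reduce to `X = x̂ + ẋ₀ u/(1+u)` and `Y = ŷ + ẏ₀ u/(1-u)`. Expanding
`X²(1+u)` and `Y²(u-1)` produces exactly the singular terms `ẋ₀² u²/(1+u)` and `ẏ₀² u²/(1-u)` that
`V` subtracts, leaving an affine function of `u`; for `u ≤ 0` the kink `u₊` vanishes.
-/

lemma uplus_of_nonneg {u : ℝ} (hu : 0 ≤ u) : uplus u = u := max_eq_left hu

lemma uplus_of_nonpos {u : ℝ} (hu : u ≤ 0) : uplus u = 0 := max_eq_right hu

lemma uminus_of_nonneg {u : ℝ} (hu : 0 ≤ u) : uminus u = 0 := min_eq_right hu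

lemma Xgeo_of_nonneg (x₀ xdot0 : ℝ) {u : ℝ} (hu : 0 ≤ u) :
    Xgeo x₀ xdot0 u = (x₀ + xdot0) + xdot0 * u / (1 + u) := by
  have h : 1 + u ≠ 0 := by positivity
  rw [Xgeo, uplus_of_nonneg hu, uminus_of_nonneg hu]
  field_simp
  ring

lemma Ygeo_of_nonneg (y₀ ydot0 : ℝ) {u : ℝ} (hu : 0 ≤ u) (hu1 : u ≠ 1) :
    Ygeo y₀ ydot0 u = (y₀ + ydot0) + ydot0 * u / (1 - u) := by
  have h : 1 - u ≠ 0 := sub_ne_zero.mpr hu1.symm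
  rw [Ygeo, uplus_of_nonneg hu, uminus_of_nonneg hu]
  field_simp
  ring

lemma Vgeo_of_nonneg (v₀ vdot0 xdot0 ydot0 : ℝ) {u : ℝ} (hu : 0 ≤ u) :
    Vgeo v₀ vdot0 xdot0 ydot0 u
      = v₀ + vdot0 * (1 + u) + ydot0 ^ 2 * u ^ 2 / (1 - u) - xdot0 ^ 2 * u ^ 2 / (1 + u) := by
  rw [Vgeo, uplus_of_nonneg hu]

lemma Vgeo_of_nonpos (v₀ vdot0 xdot0 ydot0 : ℝ) {u : ℝ} (hu : u ≤ 0) :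
    Vgeo v₀ vdot0 xdot0 ydot0 u = v₀ + vdot0 * (1 + u) := by
  simp [Vgeo, uplus_of_nonpos hu]

section Algebra

variable {K : Type*} [Field K]

lemma sq_add_div_one_add_mul_sub {a b u : K} (hu : 1 + u ≠ 0) :
    (a + b * u / (1 + u)) ^ 2 * (u + 1) - b ^ 2 * u ^ 2 / (1 + u)
      = a ^ 2 + (2 * a * b + a ^ 2) * u := by
  field_simp
  ring

lemma sq_add_div_one_sub_mul_add {a b u : K} (hu : 1 - u ≠ 0) :
    (a + b * u / (1 - u)) ^ 2 * (u - 1) + b ^ 2 * u ^ 2 / (1 - u)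
      = -a ^ 2 + (a ^ 2 - 2 * a * b) * u := by
  field_simp
  ring

end Algebra

/-- The `v`-part of the discontinuous transformation,
`v = V + X²(u+1)θ(u) + Y²(u-1)θ(u)`, maps the geodesics of the continuous metric exactly
onto the distributional `v`-geodesic of the impulsive plane wave with profile
`f(x,y) = x² - y²`, where `x̂ = x₀ + ẋ₀`, `ŷ = y₀ + ẏ₀`. -/
theorem transformation_maps_v_geodesic (x₀ xdot0 y₀ ydot0 v₀ vdot0 : ℝ) :
    (∀ u ∈ Ioo (0:ℝ) 1,
      Vgeo v₀ vdot0 xdot0 ydot0 u + (Xgeo x₀ xdot0 u) ^ 2 * (u + 1)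
          + (Ygeo y₀ ydot0 u) ^ 2 * (u - 1)
        = v₀ + vdot0 * (1 + u) + ((x₀ + xdot0) ^ 2 - (y₀ + ydot0) ^ 2)
          + (2 * (x₀ + xdot0) * xdot0 + (x₀ + xdot0) ^ 2
             - 2 * (y₀ + ydot0) * ydot0 + (y₀ + ydot0) ^ 2) * u) ∧
    (∀ u ≤ (0:ℝ), Vgeo v₀ vdot0 xdot0 ydot0 u = v₀ + vdot0 * (1 + u)) := by
  refine ⟨fun u ⟨hu0, hu1⟩ => ?_, fun u hu => Vgeo_of_nonpos v₀ vdot0 xdot0 ydot0 hu⟩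
  rw [Vgeo_of_nonneg _ _ _ _ hu0.le, Xgeo_of_nonneg _ _ hu0.le, Ygeo_of_nonneg _ _ hu0.le hu1.ne]
  have hX := sq_add_div_one_add_mul_sub (a := x₀ + xdot0) (b := xdot0)
    (show (1 : ℝ) + u ≠ 0 by linarith)
  have hY := sq_add_div_one_sub_mul_add (a := y₀ + ydot0) (b := ydot0)
    (show (1 : ℝ) - u ≠ 0 by linarith)
  linear_combination hX + hY
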